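/- Deletion–restriction for regions of hyperplane arrangements: if 𝒜 is a finite arrangement of hyperplanes in R^n, H_d ∈ 𝒜 is a distinguished hyperplane, 𝒜' = 𝒜 \ {H_d}, and 𝒜'' = {H ∩ H_d : H ∈ 𝒜', H ∩ H_d ≠ ∅} viewed as an arrangement in H_d ≅ R^{n-1}, then r(𝒜) = r(𝒜') + r(𝒜''), where r denotes the number of regions (connected components of the complement). -/

import Mathlib

/-!
Each sign vector `τ` of an arrangement cuts out an open convex cell, the intersection of the
open half-spaces it prescribes. These cells partition the complement into preconnected clopen
pieces, so the regions are exactly the nonempty cells. A region of `𝒜` is a region `C` of `𝒜'`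
together with a side of `H_d` that `C` meets. Being open, `C` meets at least one side, and both
sides as soon as it meets `H_d`; being convex, it meets `H_d` once it meets both sides
(intermediate value theorem). So `r(𝒜) = r(𝒜') + #{C | C ∩ H_d ≠ ∅}`, and the sets
`C ∩ H_d` are the cells, hence the regions, of `𝒜''`.
-/

open Set Filter Topology

theorem card_connectedComponents_eq_card_nonempty_fibers {Y S : Type*} [TopologicalSpace Y]
    [TopologicalSpace S] [DiscreteTopology S] {U : Set Y} {f : Y → S} (hf : ContinuousOn f U)
    (hfib : ∀ σ, IsPreconnected (U ∩ f ⁻¹' {σ})) :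
    Nat.card (ConnectedComponents U) = Nat.card {σ | (U ∩ f ⁻¹' {σ}).Nonempty} := by
  have hg : Continuous (U.domRestrict f) := hf.domRestrict
  have hinj : Function.Injective hg.connectedComponentsLift := by
    rintro ⟨x⟩ ⟨y⟩ hxy
    change f x = f y at hxy
    have hpre : IsPreconnected (U.domRestrict f ⁻¹' {f x}) := by
      rw [← Topology.IsInducing.subtypeVal.isPreconnected_image]
      convert hfib (f x) using 1
      ext z
      simp [and_comm]
    exact ConnectedComponents.coe_eq_coe'.2 (hpre.subset_connectedComponent hxy.symm rfl)
  rw [← Nat.card_range_of_injective hinj, ← ConnectedComponents.surjective_coe.range_comp,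
    hg.connectedComponentsLift_comp_coe, range_domRestrict]
  rfl

theorem Nat.card_set_prod_bool {α : Type*} [Finite α] (T : Set (α × Bool)) :
    Nat.card T = Nat.card {a | (a, true) ∈ T ∨ (a, false) ∈ T} +
      Nat.card {a | (a, true) ∈ T ∧ (a, false) ∈ T} := by
  classical
  have := Fintype.ofFinite α
  simp only [Nat.card_eq_fintype_card, Fintype.card_subtype, Finset.card_filter]
  rw [Fintype.sum_prod_type, ← Finset.sum_add_distrib]
  refine Finset.sum_congr rfl fun a _ => ?_
  rw [Fintype.sum_bool]
  by_cases h₁ : (a, true) ∈ T <;> by_cases h₀ : (a, false) ∈ T <;> simp [h₁, h₀]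

def halfSpace {X : Type*} (g : X → ℝ) (a : ℝ) : Bool → Set X
  | true => {x | a < g x}
  | false => {x | g x < a}

theorem mem_halfSpace_iff {X : Type*} {g : X → ℝ} {a : ℝ} {b : Bool} {x : X} :
    x ∈ halfSpace g a b ↔ g x ≠ a ∧ decide (a < g x) = b := by
  cases b <;> simp only [halfSpace, mem_ofPred_eq, decide_eq_true_eq, decide_eq_false_iff_not] <;>
    grind

theorem isOpen_halfSpace {X : Type*} [TopologicalSpace X] {g : X → ℝ} (hg : Continuous g)
    (a : ℝ) : ∀ b, IsOpen (halfSpace g a b)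
  | true => isOpen_lt continuous_const hg
  | false => isOpen_lt hg continuous_const

theorem continuousOn_decide_lt {X : Type*} [TopologicalSpace X] {g : X → ℝ} (hg : Continuous g)
    (a : ℝ) : ContinuousOn (fun x => decide (a < g x)) {x | g x ≠ a} := by
  refine continuousOn_of_forall_continuousAt fun x hx => ?_
  rcases lt_or_gt_of_ne hx with h | h
  · refine (continuousAt_const (y := false)).congr ?_
    filter_upwards [hg.continuousAt.eventually (gt_mem_nhds h)] with y hy
    simp [hy.le.not_gt]
  · refine (continuousAt_const (y := true)).congr ?_
    filter_upwards [hg.continuousAt.eventually (lt_mem_nhds h)] with y hy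
    simp [hy]

theorem IsPreconnected.inter_hyperplane_nonempty {X : Type*} [TopologicalSpace X] {C : Set X}
    (hC : IsPreconnected C) {g : X → ℝ} (hg : ContinuousOn g C) {a : ℝ}
    (h₁ : (C ∩ halfSpace g a true).Nonempty) (h₀ : (C ∩ halfSpace g a false).Nonempty) :
    (C ∩ {x | g x = a}).Nonempty := by
  obtain ⟨x, hxC, hx⟩ := h₁
  obtain ⟨y, hyC, hy⟩ := h₀
  obtain ⟨z, hzC, hz⟩ := hC.intermediate_value hyC hxC hg ⟨le_of_lt hy, le_of_lt hx⟩
  exact ⟨z, hzC, hz⟩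

variable {E : Type*} [AddCommGroup E] [Module ℝ E] [TopologicalSpace E]

theorem convex_halfSpace (φ : E →L[ℝ] ℝ) (a : ℝ) : ∀ b, Convex ℝ (halfSpace φ a b)
  | true => convex_halfSpace_gt φ.toLinearMap.isLinear a
  | false => convex_halfSpace_lt φ.toLinearMap.isLinear a

section ContinuousSMul

variable [ContinuousAdd E] [ContinuousSMul ℝ E]

theorem IsOpen.inter_halfSpace_nonempty {C : Set E} (hC : IsOpen C) {φ : E →L[ℝ] ℝ}
    (hφ : φ ≠ 0) {a : ℝ} {x : E} (hxC : x ∈ C) (hx : φ x = a) (b : Bool) :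
    (C ∩ halfSpace φ a b).Nonempty := by
  obtain ⟨u, hu⟩ := φ.exists_ne_zero hφ
  set v := (φ u)⁻¹ • u
  have hline : ∀ t : ℝ, φ (x + t • v) = a + t := by simp [v, hx, hu]
  have hev : ∀ᶠ t in 𝓝 (0 : ℝ), x + t • v ∈ C := by
    have : Continuous fun t : ℝ => x + t • v := by fun_prop
    exact this.continuousAt.preimage_mem_nhds (by simpa using hC.mem_nhds hxC)
  cases b
  · obtain ⟨t, htC, ht⟩ := ((hev.filter_mono nhdsWithin_le_nhds).and
      (self_mem_nhdsWithin (s := Iio 0))).exists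
    exact ⟨_, htC, by simpa [halfSpace, hline] using ht⟩
  · obtain ⟨t, htC, ht⟩ := ((hev.filter_mono nhdsWithin_le_nhds).and
      (self_mem_nhdsWithin (s := Ioi 0))).exists
    exact ⟨_, htC, by simpa [halfSpace, hline] using ht⟩

theorem IsOpen.inter_halfSpace_nonempty_or_iff {C : Set E} (hC : IsOpen C) {φ : E →L[ℝ] ℝ}
    (hφ : φ ≠ 0) (a : ℝ) :
    (C ∩ halfSpace φ a true).Nonempty ∨ (C ∩ halfSpace φ a false).Nonempty ↔
      C.Nonempty := by
  refine ⟨fun h => h.elim (·.mono inter_subset_left) (·.mono inter_subset_left), ?_⟩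
  rintro ⟨x, hxC⟩
  by_cases hx : φ x = a
  · exact Or.inl (hC.inter_halfSpace_nonempty hφ hxC hx true)
  · cases hb : decide (a < φ x)
    · exact Or.inr ⟨x, hxC, mem_halfSpace_iff.2 ⟨hx, hb⟩⟩
    · exact Or.inl ⟨x, hxC, mem_halfSpace_iff.2 ⟨hx, hb⟩⟩

theorem IsOpen.inter_halfSpace_nonempty_and_iff {C : Set E} (hCo : IsOpen C)
    (hC : IsPreconnected C) {φ : E →L[ℝ] ℝ} (hφ : φ ≠ 0) (a : ℝ) :
    (C ∩ halfSpace φ a true).Nonempty ∧ (C ∩ halfSpace φ a false).Nonempty ↔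
      (C ∩ {x | φ x = a}).Nonempty :=
  ⟨fun h => hC.inter_hyperplane_nonempty φ.continuous.continuousOn h.1 h.2,
    fun ⟨_, hxC, hx⟩ => ⟨hCo.inter_halfSpace_nonempty hφ hxC hx _,
      hCo.inter_halfSpace_nonempty hφ hxC hx _⟩⟩

end ContinuousSMul

namespace HyperplaneArrangement

variable {ι : Type*} (ℓ : ι → E →L[ℝ] ℝ) (c : ι → ℝ) (s : Finset ι)

def complement : Set E := {x | ∀ i ∈ s, ℓ i x ≠ c i}

noncomputable def signVector (x : E) : s → Bool := fun i => decide (c i < ℓ i x)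

def cell (τ : s → Bool) : Set E := ⋂ i : s, halfSpace (ℓ i) (c i) (τ i)

variable {ℓ c s}

theorem complement_inter_preimage_signVector (τ : s → Bool) :
    complement ℓ c s ∩ signVector ℓ c s ⁻¹' {τ} = cell ℓ c s τ := by
  ext x
  simp only [complement, cell, signVector, mem_inter_iff, mem_ofPred_eq, mem_preimage,
    mem_singleton_iff, mem_iInter, mem_halfSpace_iff, funext_iff, forall_and, Subtype.forall]

theorem isOpen_cell (τ : s → Bool) : IsOpen (cell ℓ c s τ) :=
  isOpen_iInter_of_finite fun i => isOpen_halfSpace (ℓ i).continuous _ _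

theorem convex_cell (τ : s → Bool) : Convex ℝ (cell ℓ c s τ) :=
  convex_iInter fun i => convex_halfSpace (ℓ i) _ _

theorem continuousOn_signVector : ContinuousOn (signVector ℓ c s) (complement ℓ c s) :=
  continuousOn_pi.2 fun i =>
    (continuousOn_decide_lt (ℓ i).continuous (c i)).mono fun _ hx => hx i i.2

theorem complement_anti {t : Finset ι} (h : s ⊆ t) : complement ℓ c t ⊆ complement ℓ c s :=
  fun _ hx i hi => hx i (h hi)

variable [DecidableEq ι] in
theorem complement_insert_inter_preimage (d : ι) (p : (s → Bool) × Bool) :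
    complement ℓ c (insert d s) ∩
        (fun x => (signVector ℓ c s x, decide (c d < ℓ d x))) ⁻¹' {p} =
      cell ℓ c s p.1 ∩ halfSpace (ℓ d) (c d) p.2 := by
  rw [← complement_inter_preimage_signVector]
  ext x
  simp only [complement, Finset.forall_mem_insert, mem_inter_iff, mem_ofPred_eq, mem_preimage,
    mem_singleton_iff, Prod.ext_iff, mem_halfSpace_iff]
  tauto

variable [ContinuousAdd E] [ContinuousSMul ℝ E]

theorem card_connectedComponents_complement :
    Nat.card (ConnectedComponents (complement ℓ c s)) =
      Nat.card {τ | (cell ℓ c s τ).Nonempty} := by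
  rw [card_connectedComponents_eq_card_nonempty_fibers continuousOn_signVector]
  · simp only [complement_inter_preimage_signVector]
  · intro τ
    rw [complement_inter_preimage_signVector]
    exact (convex_cell τ).isPreconnected

theorem card_connectedComponents_hyperplane_inter_complement (φ : E →L[ℝ] ℝ) (a : ℝ) :
    Nat.card (ConnectedComponents ({x | φ x = a} ∩ complement ℓ c s : Set E)) =
      Nat.card {τ | (cell ℓ c s τ ∩ {x | φ x = a}).Nonempty} := by
  have hfib : ∀ τ, {x | φ x = a} ∩ complement ℓ c s ∩ signVector ℓ c s ⁻¹' {τ} =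
      cell ℓ c s τ ∩ {x | φ x = a} := fun τ => by
    rw [inter_assoc, complement_inter_preimage_signVector, inter_comm]
  rw [card_connectedComponents_eq_card_nonempty_fibers
    (continuousOn_signVector.mono inter_subset_right)]
  · simp only [hfib]
  · intro τ
    rw [hfib]
    exact ((convex_cell τ).inter (convex_hyperplane φ.toLinearMap.isLinear a)).isPreconnected

variable [DecidableEq ι]

theorem card_connectedComponents_complement_insert (d : ι) :
    Nat.card (ConnectedComponents (complement ℓ c (insert d s))) =
      Nat.card {p : (s → Bool) × Bool |
        (cell ℓ c s p.1 ∩ halfSpace (ℓ d) (c d) p.2).Nonempty} := by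
  rw [card_connectedComponents_eq_card_nonempty_fibers
    ((continuousOn_signVector.mono (complement_anti (Finset.subset_insert d s))).prodMk
      ((continuousOn_decide_lt (ℓ d).continuous (c d)).mono
        fun _ (hx : _ ∈ complement ℓ c (insert d s)) => hx d (Finset.mem_insert_self d s)))]
  · simp only [complement_insert_inter_preimage]
  · intro p
    rw [complement_insert_inter_preimage]
    exact ((convex_cell p.1).inter (convex_halfSpace (ℓ d) _ p.2)).isPreconnected

theorem card_connectedComponents_complement_insert_eq_add {d : ι} (hd : ℓ d ≠ 0) :
    Nat.card (ConnectedComponents (complement ℓ c (insert d s))) =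
      Nat.card (ConnectedComponents (complement ℓ c s)) +
        Nat.card (ConnectedComponents ({x | ℓ d x = c d} ∩ complement ℓ c s : Set E)) := by
  rw [card_connectedComponents_complement_insert, card_connectedComponents_complement,
    card_connectedComponents_hyperplane_inter_complement, Nat.card_set_prod_bool]
  congr 3 <;> ext τ
  · exact (isOpen_cell τ).inter_halfSpace_nonempty_or_iff hd _
  · exact (isOpen_cell τ).inter_halfSpace_nonempty_and_iff (convex_cell τ).isPreconnected hd _

end HyperplaneArrangement

noncomputable def dotProductCLM {m : Type*} [Fintype m] (v : m → ℝ) : (m → ℝ) →L[ℝ] ℝ :=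
  LinearMap.toContinuousLinearMap (dotProductBilin ℝ ℝ v)

theorem dotProductCLM_apply {m : Type*} [Fintype m] (v x : m → ℝ) :
    dotProductCLM v x = ∑ i, v i * x i :=
  rfl

theorem dotProductCLM_ne_zero {m : Type*} [Fintype m] [DecidableEq m] {v : m → ℝ}
    (hv : v ≠ 0) : dotProductCLM v ≠ 0 := fun h =>
  hv <| funext fun i => by
    simpa [dotProductCLM_apply, Pi.single_apply] using congrArg (· (Pi.single i 1)) h

theorem deletion_restriction_region_count_general (n : ℕ)
    (𝒜 : Finset ((Fin n → ℝ) × ℝ))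
    (hnz : ∀ p ∈ 𝒜, p.1 ≠ 0)
    (d : (Fin n → ℝ) × ℝ) (hd : d ∈ 𝒜) :
    Nat.card (ConnectedComponents
        {x : Fin n → ℝ // ∀ p ∈ 𝒜, (∑ i, p.1 i * x i) ≠ p.2}) =
      Nat.card (ConnectedComponents
        {x : Fin n → ℝ // ∀ p ∈ 𝒜.erase d, (∑ i, p.1 i * x i) ≠ p.2}) +
      Nat.card (ConnectedComponents
        {x : Fin n → ℝ // (∑ i, d.1 i * x i) = d.2 ∧
          ∀ p ∈ 𝒜.erase d, (∑ i, p.1 i * x i) ≠ p.2}) := by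
  have h := HyperplaneArrangement.card_connectedComponents_complement_insert_eq_add
    (ℓ := fun p => dotProductCLM p.1) (c := Prod.snd) (s := 𝒜.erase d)
    (dotProductCLM_ne_zero (hnz d hd))
  rwa [Finset.insert_erase hd] at h

/-- Deletion–restriction for the number of regions of a hyperplane arrangement:
`r(𝒜) = r(𝒜') + r(𝒜'')`, where `𝒜' = 𝒜 \ {H_d}` and `𝒜''` is the arrangement
induced in the distinguished hyperplane `H_d`.  Hyperplanes are encoded by pairs
`p = (normal, offset)` with nonzero normal, the corresponding hyperplane being
`{x | ∑ i, p.1 i * x i = p.2}`, and the encoding is injective on `𝒜` so that the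
pairs represent distinct hyperplanes. -/
theorem deletion_restriction_region_count (n : ℕ)
    (𝒜 : Finset ((Fin n → ℝ) × ℝ))
    (hnz : ∀ p ∈ 𝒜, p.1 ≠ 0)
    (hinj : ∀ p ∈ 𝒜, ∀ q ∈ 𝒜,
      {x : Fin n → ℝ | (∑ i, p.1 i * x i) = p.2} =
        {x : Fin n → ℝ | (∑ i, q.1 i * x i) = q.2} → p = q)
    (d : (Fin n → ℝ) × ℝ) (hd : d ∈ 𝒜) :
    Nat.card (ConnectedComponents
        {x : Fin n → ℝ // ∀ p ∈ 𝒜, (∑ i, p.1 i * x i) ≠ p.2}) =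
      Nat.card (ConnectedComponents
        {x : Fin n → ℝ // ∀ p ∈ 𝒜.erase d, (∑ i, p.1 i * x i) ≠ p.2}) +
      Nat.card (ConnectedComponents
        {x : Fin n → ℝ // (∑ i, d.1 i * x i) = d.2 ∧
          ∀ p ∈ 𝒜.erase d, (∑ i, p.1 i * x i) ≠ p.2}) :=
  deletion_restriction_region_count_general n 𝒜 hnz d hd
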